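/- Let H be an ℵ₀-monoid and x ∈ H a braiding element, i.e., for all families (x_i), (y_i) in add(x) with Σ_i x_i = Σ_i y_i there exist integers 0 = m_0 < m_1 < ⋯, 0 ≤ n_0 < n_1 < ⋯ and sequences (u_j), (v_j) in add(x) with v_0 = x_0 such that Σ_{i=0}^{n_0} y_i = v_0 + u_0, Σ_{i=m_j+1}^{m_{j+1}} x_i = u_j + v_{j+1}, and Σ_{i=n_j+1}^{n_{j+1}} y_i = u_{j+1} + v_{j+1} for all j ≥ 0. If z₁, z₂ ∈ add(x) satisfy ℵ₀·z₁ = ℵ₀·z₂, then add(z₁) = add(z₂). -/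

import Mathlib

/-- An ℵ₀-monoid: a set with 0 and a countable summation map satisfying (A1) and (A2). -/
structure AlephMonoid (H : Type*) where
  zero : H
  sum : (ℕ → H) → H
  a1 : ∀ x : ℕ → H, (∀ i, i ≠ 0 → x i = zero) → sum x = x 0
  a2 : ∀ (x : ℕ × ℕ → H) (π : ℕ × ℕ ≃ ℕ),
    sum (fun i => sum (fun j => x (i, j))) = sum (fun k => x (π.symm k))

namespace AlephMonoid

variable {H : Type*}

/-- The induced binary addition. -/
def add (M : AlephMonoid H) (a b : H) : H :=
  M.sum (fun i => if i = 0 then a else if i = 1 then b else M.zero)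

/-- ℵ₀·a : the countable sum of copies of `a`. -/
def infMul (M : AlephMonoid H) (a : H) : H := M.sum (fun _ => a)

/-- n·a : finite multiples. -/
def nsmul (M : AlephMonoid H) : ℕ → H → H
  | 0, _ => M.zero
  | n + 1, a => M.add a (M.nsmul n a)

/-- `y ∈ add(x)` : `y` is a direct summand of a finite multiple of `x`. -/
def inAdd (M : AlephMonoid H) (x y : H) : Prop :=
  ∃ z : H, ∃ n : ℕ, 1 ≤ n ∧ M.add y z = M.nsmul n x

/-- Multiplication by a cardinal α with 0 ≤ α ≤ ℵ₀ (`none` stands for ℵ₀). -/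
def cmul (M : AlephMonoid H) : Option ℕ → H → H
  | some n, a => M.nsmul n a
  | none, a => M.infMul a

/-- The finite sum `Σ_{i=a}^{b} f i`, expressed via the countable sum of a
family supported on the interval `[a, b]`. -/
def intervalSum (M : AlephMonoid H) (f : ℕ → H) (a b : ℕ) : H :=
  M.sum (fun i => if a ≤ i ∧ i ≤ b then f i else M.zero)

end AlephMonoid


namespace AlephMonoid

variable {H : Type*}

variable (M : AlephMonoid H)

lemma sum_zero : M.sum (fun _ => M.zero) = M.zero :=
  M.a1 _ (fun _ _ => rfl)

lemma double_sum (x : ℕ × ℕ → H) (J : ℕ ≃ ℕ × ℕ) :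
    M.sum (fun i => M.sum (fun j => x (i, j))) = M.sum (fun k => x (J k)) := by
  simpa using M.a2 x J.symm

lemma sum_perm (g : ℕ → H) (σ : ℕ ≃ ℕ) :
    M.sum (fun k => g (σ k)) = M.sum g := by
  set e : ℕ × ℕ ≃ ℕ := Denumerable.eqv (ℕ × ℕ) with he
  have h1 := M.a2 (fun p => g (e p)) e
  have h2 := M.a2 (fun p => g (e p)) (e.trans σ.symm)
  simp only [Equiv.symm_trans_apply, Equiv.apply_symm_apply, Equiv.symm_symm] at h1 h2
  rw [h1] at h2
  exact h2.symm

/-- the even-spread of a family -/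
def spread (f : ℕ → H) : ℕ → H := fun k => if k % 2 = 0 then f (k / 2) else M.zero

/-- bijection used for the spread lemma -/
def Keqv : ℕ ≃ ℕ × ℕ where
  toFun k := if k % 2 = 0 then (k / 2, 0)
    else ((Nat.unpair ((k - 1) / 2)).1, (Nat.unpair ((k - 1) / 2)).2 + 1)
  invFun p := match p with
    | (i, 0) => 2 * i
    | (i, j + 1) => 2 * Nat.pair i j + 1
  left_inv k := by
    by_cases h : k % 2 = 0
    · simp only [if_pos h]
      show 2 * (k / 2) = k
      omega
    · simp only [if_neg h]
      show 2 * Nat.pair _ _ + 1 = k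
      rw [Nat.pair_unpair]
      omega
  right_inv p := by
    rcases p with ⟨i, _ | j⟩
    · have h0 : (2 * i) % 2 = 0 := by omega
      simp [h0]
    · have h1 : ¬ ((2 * Nat.pair i j + 1) % 2 = 0) := by omega
      have h2 : (2 * Nat.pair i j + 1 - 1) / 2 = Nat.pair i j := by omega
      simp [h1, h2]

lemma sum_spread (f : ℕ → H) : M.sum (M.spread f) = M.sum f := by
  have h := M.double_sum (fun p => if p.2 = 0 then f p.1 else M.zero) Keqv
  have hl : (fun i => M.sum (fun j => if j = 0 then f i else M.zero)) = f := by
    funext i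
    exact M.a1 _ (fun j hj => by simp [hj])
  rw [hl] at h
  rw [h]
  congr 1
  funext k
  by_cases hk : k % 2 = 0 <;> simp [spread, Keqv, hk]

/-- bijection used for the cons lemma -/
def Jeqv : ℕ ≃ ℕ × ℕ where
  toFun k :=
    if k = 0 then (0, 0)
    else if k % 2 = 0 then (1, k / 2 - 1)
    else if k % 4 = 1 then (0, (k - 1) / 4 + 1)
    else ((Nat.unpair ((k - 3) / 4)).1 + 2, (Nat.unpair ((k - 3) / 4)).2)
  invFun p := match p with
    | (0, 0) => 0
    | (0, j + 1) => 4 * j + 1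
    | (1, j) => 2 * j + 2
    | (i + 2, j) => 4 * Nat.pair i j + 3
  left_inv k := by
    by_cases h0 : k = 0
    · simp only [if_pos h0]
      exact h0.symm
    · by_cases h2 : k % 2 = 0
      · simp only [if_neg h0, if_pos h2]
        show 2 * (k / 2 - 1) + 2 = k
        omega
      · by_cases h4 : k % 4 = 1
        · simp only [if_neg h0, if_neg h2, if_pos h4]
          show 4 * ((k - 1) / 4) + 1 = k
          omega
        · simp only [if_neg h0, if_neg h2, if_neg h4]
          show 4 * Nat.pair _ _ + 3 = k
          rw [Nat.pair_unpair]
          omega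
  right_inv p := by
    rcases p with ⟨(_ | _ | i), j⟩
    · rcases j with _ | j
      · simp
      · have h0 : ¬ (4 * j + 1 = 0) := by omega
        have h2 : ¬ ((4 * j + 1) % 2 = 0) := by omega
        have h4 : (4 * j + 1) % 4 = 1 := by omega
        have h5 : (4 * j + 1 - 1) / 4 = j := by omega
        simp only [if_neg h0, if_neg h2, if_pos h4, h5]
    · have h0 : ¬ (2 * j + 2 = 0) := by omega
      have h2 : (2 * j + 2) % 2 = 0 := by omega
      have h5 : (2 * j + 2) / 2 - 1 = j := by omega
      simp only [if_neg h0, if_pos h2, h5]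
    · have h0 : ¬ (4 * Nat.pair i j + 3 = 0) := by omega
      have h2 : ¬ ((4 * Nat.pair i j + 3) % 2 = 0) := by omega
      have h4 : ¬ ((4 * Nat.pair i j + 3) % 4 = 1) := by omega
      have h5 : (4 * Nat.pair i j + 3 - 3) / 4 = Nat.pair i j := by omega
      simp only [if_neg h0, if_neg h2, if_neg h4, h5, Nat.unpair_pair]

lemma sum_cons (f : ℕ → H) :
    M.sum f = M.add (f 0) (M.sum (fun k => f (k + 1))) := by
  set x : ℕ × ℕ → H := fun p =>
    if p.1 = 0 then (if p.2 = 0 then f 0 else M.zero)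
    else if p.1 = 1 then f (p.2 + 1) else M.zero with hx
  have h := M.double_sum x Jeqv
  have hl : (fun i => M.sum (fun j => x (i, j))) =
      (fun i => if i = 0 then f 0 else if i = 1 then M.sum (fun k => f (k + 1)) else M.zero) := by
    funext i
    rcases i with _ | _ | i
    · simpa [hx] using M.a1 (fun j => if j = 0 then f 0 else M.zero) (fun j hj => by simp [hj])
    · simp [hx]
    · simpa [hx] using M.sum_zero
  have hr : (fun k => x (Jeqv k)) = M.spread f := by
    funext k
    by_cases h0 : k = 0
    · subst h0
      simp [hx, Jeqv, spread]
    · by_cases h2 : k % 2 = 0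
      · have h3 : k / 2 - 1 + 1 = k / 2 := by omega
        simp [hx, Jeqv, spread, h0, h2, h3]
      · by_cases h4 : k % 4 = 1 <;> simp [hx, Jeqv, spread, h0, h2, h4]
  rw [hl, hr, M.sum_spread] at h
  exact h.symm ▸ rfl

lemma sum_cons' (f : ℕ → H) :
    M.add (f 0) (M.sum (fun k => f (k + 1))) = M.sum f := (M.sum_cons f).symm



lemma add_zero' (a : H) : M.add a M.zero = a := by
  refine M.a1 _ (fun i hi => ?_)
  simp only [if_neg hi]
  split <;> rfl

lemma add_comm' (a b : H) : M.add a b = M.add b a := by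
  have := M.sum_perm
    (fun i => if i = 0 then a else if i = 1 then b else M.zero) (Equiv.swap 0 1)
  rw [show (fun k => (fun i => if i = 0 then a else if i = 1 then b else M.zero)
      ((Equiv.swap 0 1) k)) = (fun i => if i = 0 then b else if i = 1 then a else M.zero) from ?_] at this
  · exact this.symm
  · funext k
    rcases k with _ | _ | k
    · simp
    · simp
    · rw [Equiv.swap_apply_of_ne_of_ne (by omega) (by omega)]
      simp

/-- cyclic permutation 0↦2, 1↦0, 2↦1 -/
def cyc : ℕ ≃ ℕ := (Equiv.swap 0 2).trans (Equiv.swap 0 1)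

lemma sum_trip (a b c : H) :
    M.sum (fun i => if i = 0 then a else if i = 1 then b else if i = 2 then c else M.zero)
      = M.add a (M.add b c) := by
  rw [M.sum_cons]
  simp only [Nat.add_eq_zero, one_ne_zero, and_false, if_false]
  congr 1
  show M.sum _ = M.sum _
  congr 1
  funext k
  rcases k with _ | _ | k <;> simp

lemma add_assoc' (a b c : H) : M.add (M.add a b) c = M.add a (M.add b c) := by
  rw [M.add_comm' (M.add a b) c]
  rw [← M.sum_trip c a b, ← M.sum_trip a b c]
  have := M.sum_perm
    (fun i => if i = 0 then a else if i = 1 then b else if i = 2 then c else M.zero) cyc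
  rw [← this]
  congr 1
  funext k
  have hc : ∀ i, cyc i = if i = 0 then 2 else if i = 1 then 0 else if i = 2 then 1 else i := by
    intro i
    rcases i with _ | _ | _ | i
    · rfl
    · rfl
    · rfl
    · show (Equiv.swap 0 1) ((Equiv.swap 0 2) (i + 3)) = _
      rw [Equiv.swap_apply_of_ne_of_ne (show i + 3 ≠ 0 by omega) (show i + 3 ≠ 2 by omega),
        Equiv.swap_apply_of_ne_of_ne (show i + 3 ≠ 0 by omega) (show i + 3 ≠ 1 by omega)]
      simp
  rcases k with _ | _ | _ | k
  · simp [hc]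
  · simp [hc]
  · simp [hc]
  · have h3 : ¬ (k + 3 = 0) ∧ ¬ (k + 3 = 1) ∧ ¬ (k + 3 = 2) := by omega
    simp [hc, h3.1, h3.2.1, h3.2.2]


lemma zero_add' (a : H) : M.add M.zero a = a := by
  rw [M.add_comm', M.add_zero']

lemma nsmul_one (a : H) : M.nsmul 1 a = a := by
  show M.add a M.zero = a
  exact M.add_zero' a

lemma nsmul_add_nat (p q : ℕ) (a : H) :
    M.nsmul (p + q) a = M.add (M.nsmul p a) (M.nsmul q a) := by
  induction p with
  | zero => simp only [Nat.zero_add]; rw [show M.nsmul 0 a = M.zero from rfl,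
      M.add_comm', M.add_zero']
  | succ p ih =>
    rw [show p + 1 + q = p + q + 1 by omega]
    show M.nsmul (p + q + 1) a = M.add (M.add a (M.nsmul p a)) (M.nsmul q a)
    rw [show M.nsmul (p + q + 1) a = M.add a (M.nsmul (p + q) a) from rfl, ih, ← M.add_assoc']

lemma nsmul_add_distrib (k : ℕ) (a b : H) :
    M.nsmul k (M.add a b) = M.add (M.nsmul k a) (M.nsmul k b) := by
  induction k with
  | zero => show M.zero = M.add M.zero M.zero; rw [M.add_zero']
  | succ k ih =>
    show M.add (M.add a b) (M.nsmul k (M.add a b))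
        = M.add (M.add a (M.nsmul k a)) (M.add b (M.nsmul k b))
    rw [ih, M.add_assoc' a b, M.add_assoc' a (M.nsmul k a),
      ← M.add_assoc' b (M.nsmul k a), M.add_comm' b (M.nsmul k a),
      M.add_assoc' (M.nsmul k a) b]

lemma nsmul_mul (n m : ℕ) (a : H) :
    M.nsmul (n * m) a = M.nsmul n (M.nsmul m a) := by
  induction n with
  | zero => rw [Nat.zero_mul]; rfl
  | succ n ih =>
    rw [show (n + 1) * m = m + n * m by ring, M.nsmul_add_nat, ih]
    rfl

lemma intervalSum_const (c : H) (N : ℕ) :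
    M.intervalSum (fun _ => c) 0 N = M.nsmul (N + 1) c := by
  have key : ∀ N : ℕ, M.sum (fun i => if i ≤ N then c else M.zero) = M.nsmul (N + 1) c := by
    intro N
    induction N with
    | zero =>
      rw [M.a1 _ (fun i hi => if_neg (by omega))]
      simp [M.nsmul_one]
    | succ N ih =>
      rw [M.sum_cons]
      simp only [Nat.zero_le, if_pos]
      have : (fun k => if k + 1 ≤ N + 1 then c else M.zero)
          = (fun k => if k ≤ N then c else M.zero) := by
        funext k
        by_cases h : k ≤ N
        · simp [h, Nat.succ_le_succ h]
        · simp [h, fun hh => h (Nat.le_of_succ_le_succ hh)]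
      rw [this, ih]
      rfl
  rw [intervalSum, show (fun i => if 0 ≤ i ∧ i ≤ N then (fun _ => c) i else M.zero)
    = (fun i => if i ≤ N then c else M.zero) from by funext i; simp, key]

lemma inAdd_trans {a b w : H} (hab : M.inAdd a b) (hbw : M.inAdd b w) : M.inAdd a w := by
  obtain ⟨s, m, hm, hs⟩ := hab
  obtain ⟨t, n, hn, ht⟩ := hbw
  refine ⟨M.add t (M.nsmul n s), n * m, Nat.one_le_iff_ne_zero.mpr (by positivity), ?_⟩
  rw [← M.add_assoc', ht, M.nsmul_mul, ← M.nsmul_add_distrib, hs]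

end AlephMonoid

/-- if x is a braiding element and ℵ₀·z₁ = ℵ₀·z₂ for z₁, z₂ ∈ add(x),
then add(z₁) = add(z₂). -/
theorem braiding_infMul_eq_add_eq {H : Type*} (M : AlephMonoid H) (x : H)
    (hbraid : ∀ x' y' : ℕ → H, (∀ i, M.inAdd x (x' i)) → (∀ i, M.inAdd x (y' i)) →
      M.sum x' = M.sum y' →
      ∃ (m n : ℕ → ℕ) (u v : ℕ → H),
        m 0 = 0 ∧ StrictMono m ∧ StrictMono n ∧
        (∀ j, M.inAdd x (u j)) ∧ (∀ j, M.inAdd x (v j)) ∧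
        v 0 = x' 0 ∧
        M.intervalSum y' 0 (n 0) = M.add (v 0) (u 0) ∧
        (∀ j, M.intervalSum x' (m j + 1) (m (j + 1)) = M.add (u j) (v (j + 1))) ∧
        (∀ j, M.intervalSum y' (n j + 1) (n (j + 1)) = M.add (u (j + 1)) (v (j + 1))))
    (z₁ z₂ : H) (h₁ : M.inAdd x z₁) (h₂ : M.inAdd x z₂)
    (heq : M.infMul z₁ = M.infMul z₂) :
    ∀ w : H, M.inAdd z₁ w ↔ M.inAdd z₂ w := by
  have key : ∀ a b : H, M.inAdd x a → M.inAdd x b → M.infMul a = M.infMul b →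
      M.inAdd b a := by
    intro a b ha hb hab
    obtain ⟨m, n, u, v, -, -, -, -, -, hv0, h0, -, -⟩ :=
      hbraid (fun _ => a) (fun _ => b) (fun _ => ha) (fun _ => hb) hab
    rw [M.intervalSum_const] at h0
    exact ⟨u 0, n 0 + 1, Nat.le_add_left 1 (n 0), by rw [← hv0]; exact h0.symm⟩
  intro w
  constructor
  · intro hw; exact M.inAdd_trans (key z₁ z₂ h₁ h₂ heq) hw
  · intro hw; exact M.inAdd_trans (key z₂ z₁ h₂ h₁ heq.symm) hw
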